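/- Let p be an odd prime and Q = [A,B,C] a binary quadratic form with integer coefficients such that A ≠ 0, p ∣ A, p ∣ B, p ∤ C, and the p-adic valuation v_p(B² − 4AC) is even (and B² − 4AC ≠ 0). Then both roots r₁, r₂ ∈ ℂ_p of Q(z,1) = Az² + Bz + C satisfy v_p(r_i) ≤ −1. -/

import Mathlib

/-!
By Vieta, `‖A‖ ‖r₁ r₂‖ = ‖C‖ = 1` and `‖A‖ ‖r₁ + r₂‖ = ‖B‖ ≤ p⁻¹`. In an ultrametric field either
`‖r₁‖ ≠ ‖r₂‖`, and then the smaller norm is at most `‖r₁ + r₂‖`, which forces the larger one to be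
at least `p`; or `‖r₁‖ = ‖r₂‖ = ‖A‖^(-1/2)`, which is at least `p` once `p² ∣ A`. Finally `p² ∣ A`
because otherwise `B² − 4AC` would have `p`-adic valuation exactly `1`.
-/

/-- The additive valuation on a normed field, normalized so that `vp p (p) = 1`
when `‖(p : K)‖ = 1/p` (as holds in `ℂ_p`): `vp x = -log_p ‖x‖`. -/
noncomputable def vp (p : ℕ) {K : Type*} [NormedField K] (x : K) : ℝ :=
  -Real.logb p ‖x‖

theorem le_norm_of_sq_le_norm_mul {K : Type*} [NormedDivisionRing K] [IsUltrametricDist K]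
    {x y : K} {R : ℝ} (hsq : R ^ 2 ≤ ‖x * y‖) (hadd : R * ‖x + y‖ ≤ ‖x * y‖) : R ≤ ‖y‖ := by
  rw [norm_mul] at hsq hadd
  rcases le_or_gt R 0 with hR | hR
  · exact hR.trans (norm_nonneg y)
  rcases eq_or_ne ‖x‖ ‖y‖ with heq | hne
  · rw [heq, ← sq] at hsq
    exact le_of_pow_le_pow_left₀ two_ne_zero (norm_nonneg y) hsq
  · have hx : 0 < ‖x‖ := by
      by_contra! h
      nlinarith [norm_nonneg x, norm_nonneg y]
    have hx_le : ‖x‖ ≤ ‖x + y‖ := by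
      rw [IsUltrametricDist.norm_add_eq_max_of_norm_ne_norm hne]
      exact le_max_left _ _
    refine le_of_mul_le_mul_left ?_ hx
    nlinarith

theorem le_norm_roots_of_norm_coeff_le {K : Type*} [NormedField K] [IsUltrametricDist K]
    {a b c r₁ r₂ : K} {R : ℝ} (hc : c ≠ 0)
    (hfac : ∀ z, a * z ^ 2 + b * z + c = a * (z - r₁) * (z - r₂))
    (ha : ‖a‖ * R ^ 2 ≤ ‖c‖) (hb : ‖b‖ * R ≤ ‖c‖) : R ≤ ‖r₁‖ ∧ R ≤ ‖r₂‖ := by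
  have hprod : a * (r₁ * r₂) = c := by linear_combination -hfac 0
  have hsum : a * (r₁ + r₂) = -b := by linear_combination hfac 1 - hfac 0
  have ha0 : 0 < ‖a‖ := norm_pos_iff.mpr (left_ne_zero_of_mul (hprod ▸ hc))
  have hsq : R ^ 2 ≤ ‖r₁ * r₂‖ := by
    refine le_of_mul_le_mul_left ?_ ha0
    rwa [← norm_mul, hprod]
  have hadd : R * ‖r₁ + r₂‖ ≤ ‖r₁ * r₂‖ := by
    refine le_of_mul_le_mul_left ?_ ha0
    rwa [mul_left_comm, ← norm_mul, hsum, norm_neg, ← norm_mul, hprod, mul_comm]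
  exact ⟨le_norm_of_sq_le_norm_mul (by rwa [mul_comm r₂]) (by rwa [mul_comm r₂, add_comm]),
    le_norm_of_sq_le_norm_mul hsq hadd⟩

theorem vp_le_neg_one_of_le_norm {p : ℕ} (hp : 1 < p) {K : Type*} [NormedField K] {x : K}
    (hx : (p : ℝ) ≤ ‖x‖) : vp p x ≤ -1 := by
  have hp' : (1 : ℝ) < p := by exact_mod_cast hp
  rw [vp, neg_le_neg_iff, ← Real.logb_self_eq_one hp']
  exact Real.logb_le_logb_of_le hp' (by positivity) hx

section PadicAlgebra

variable {p : ℕ} [Fact p.Prime] {K : Type*} [NormedField K] [Algebra ℚ_[p] K]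

theorem norm_intCast_eq_padicNorm (hK : ∀ x : ℚ_[p], ‖algebraMap ℚ_[p] K x‖ = ‖x‖) (n : ℤ) :
    ‖(n : K)‖ = ‖(n : ℚ_[p])‖ := by
  rw [← map_intCast (algebraMap ℚ_[p] K), hK]

theorem isUltrametricDist_of_norm_algebraMap_padic
    (hK : ∀ x : ℚ_[p], ‖algebraMap ℚ_[p] K x‖ = ‖x‖) : IsUltrametricDist K :=
  IsUltrametricDist.isUltrametricDist_of_forall_norm_natCast_le_one fun n => by
    rw [← Int.cast_natCast, norm_intCast_eq_padicNorm hK]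
    exact Padic.norm_int_le_one n

theorem norm_intCast_mul_pow_le_one (hK : ∀ x : ℚ_[p], ‖algebraMap ℚ_[p] K x‖ = ‖x‖)
    {n : ℤ} {k : ℕ} (h : (p : ℤ) ^ k ∣ n) : ‖(n : K)‖ * (p : ℝ) ^ k ≤ 1 := by
  have hpk : 0 < (p : ℝ) ^ k := pow_pos (Nat.cast_pos.mpr (Fact.out : p.Prime).pos) k
  have := (Padic.norm_int_le_pow_iff_dvd n k).mpr h
  rwa [zpow_neg, zpow_natCast, inv_eq_one_div, le_div_iff₀ hpk,
    ← norm_intCast_eq_padicNorm hK] at this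

theorem norm_intCast_eq_one (hK : ∀ x : ℚ_[p], ‖algebraMap ℚ_[p] K x‖ = ‖x‖)
    {n : ℤ} (h : ¬ (p : ℤ) ∣ n) : ‖(n : K)‖ = 1 := by
  rw [norm_intCast_eq_padicNorm hK]
  exact (Padic.norm_int_le_one n).antisymm (not_lt.mp (h ∘ Padic.norm_intCast_lt_one_iff.mp))

end PadicAlgebra

theorem sq_dvd_of_even_padicValInt_discrim {p : ℕ} [hp : Fact p.Prime] (hp2 : p ≠ 2)
    {A B C : ℤ} (hpA : (p : ℤ) ∣ A) (hpB : (p : ℤ) ∣ B) (hpC : ¬ (p : ℤ) ∣ C)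
    (heven : Even (padicValInt p (B ^ 2 - 4 * A * C))) : (p : ℤ) ^ 2 ∣ A := by
  by_contra hA
  have hp_not_dvd_four : ¬ (p : ℤ) ∣ 4 := fun h =>
    hp2 <| (Nat.prime_dvd_prime_iff_eq hp.out Nat.prime_two).mp <|
      hp.out.dvd_of_dvd_pow (n := 2) (by exact_mod_cast h)
  have hprime : Prime (p : ℤ) := Nat.prime_iff_prime_int.mp hp.out
  have hcop : IsCoprime ((p : ℤ) ^ 2) (4 * C) :=
    ((hprime.coprime_iff_not_dvd).mpr fun h =>
      (hprime.dvd_or_dvd h).elim hp_not_dvd_four hpC).pow_left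
  have h1 : (p : ℤ) ^ 1 ∣ B ^ 2 - 4 * A * C :=
    (pow_one (p : ℤ)).symm ▸ dvd_sub (hpB.pow two_ne_zero) ((hpA.mul_left 4).mul_right C)
  have h2 : ¬ (p : ℤ) ^ 2 ∣ B ^ 2 - 4 * A * C := fun h =>
    hA <| hcop.dvd_of_dvd_mul_right <| by
      simpa [mul_comm, mul_left_comm] using dvd_sub (pow_dvd_pow_of_dvd hpB 2) h
  have hval : padicValInt p (B ^ 2 - 4 * A * C) = 1 := by
    have := (padicValInt_dvd_iff 1 _).mp h1
    have := (padicValInt_dvd_iff 2 _).not.mp h2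
    omega
  exact Nat.not_even_one (hval ▸ heven)

theorem stmt6_general (p : ℕ) [Fact p.Prime] (hp : p ≠ 2)
    (K : Type*) [NormedField K] [Algebra ℚ_[p] K]
    (hK : ∀ x : ℚ_[p], ‖algebraMap ℚ_[p] K x‖ = ‖x‖)
    (A B C : ℤ)
    (hpA : (p : ℤ) ∣ A) (hpB : (p : ℤ) ∣ B) (hpC : ¬ (p : ℤ) ∣ C)
    (heven : Even (padicValInt p (B ^ 2 - 4 * A * C)))
    (r₁ r₂ : K)
    (hfac : ∀ z : K, (A : K) * z ^ 2 + (B : K) * z + (C : K) = (A : K) * (z - r₁) * (z - r₂)) :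
    vp p r₁ ≤ -1 ∧ vp p r₂ ≤ -1 := by
  have := isUltrametricDist_of_norm_algebraMap_padic hK
  have hC : ‖(C : K)‖ = 1 := norm_intCast_eq_one hK hpC
  have hA : ‖(A : K)‖ * (p : ℝ) ^ 2 ≤ ‖(C : K)‖ :=
    hC ▸ norm_intCast_mul_pow_le_one hK (sq_dvd_of_even_padicValInt_discrim hp hpA hpB hpC heven)
  have hB : ‖(B : K)‖ * (p : ℝ) ≤ ‖(C : K)‖ := by
    simpa [hC] using norm_intCast_mul_pow_le_one hK (k := 1) (by simpa using hpB)
  obtain ⟨h₁, h₂⟩ :=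
    le_norm_roots_of_norm_coeff_le (norm_ne_zero_iff.mp (hC ▸ one_ne_zero)) hfac hA hB
  have hp1 := (Fact.out : p.Prime).one_lt
  exact ⟨vp_le_neg_one_of_le_norm hp1 h₁, vp_le_neg_one_of_le_norm hp1 h₂⟩

/-- Let `p` be an odd prime and `Q = [A,B,C]` an integral binary
quadratic form with `A ≠ 0`, `p ∣ A`, `p ∣ B`, `p ∤ C`, nonzero discriminant
`B² − 4AC` of even `p`-adic valuation.  Then both roots `r₁, r₂ ∈ ℂ_p` of
`Q(z,1) = Az² + Bz + C` satisfy `v_p(rᵢ) ≤ −1`.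
Here `ℂ_p` is modelled by a complete algebraically closed normed field `K` equipped
with an isometric `ℚ_[p]`-algebra structure. -/
theorem stmt6 (p : ℕ) [Fact p.Prime] (hp : p ≠ 2)
    (K : Type*) [NormedField K] [Algebra ℚ_[p] K] [IsAlgClosed K] [CompleteSpace K]
    (hK : ∀ x : ℚ_[p], ‖algebraMap ℚ_[p] K x‖ = ‖x‖)
    (A B C : ℤ) (hA : A ≠ 0)
    (hpA : (p : ℤ) ∣ A) (hpB : (p : ℤ) ∣ B) (hpC : ¬ (p : ℤ) ∣ C)
    (hdisc : B ^ 2 - 4 * A * C ≠ 0)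
    (heven : Even (padicValInt p (B ^ 2 - 4 * A * C)))
    (r₁ r₂ : K)
    (hfac : ∀ z : K, (A : K) * z ^ 2 + (B : K) * z + (C : K) = (A : K) * (z - r₁) * (z - r₂)) :
    vp p r₁ ≤ -1 ∧ vp p r₂ ≤ -1 :=
  stmt6_general p hp K hK A B C hpA hpB hpC heven r₁ r₂ hfac
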